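/- arXiv:1507.02460 — 4 statements merged into one kernel-verified Lean document; each statement's English description precedes it below -/
import Mathlib

section
/- For real vectors h, h' ∈ ℝ³, the determinant of H = Σᵢ hᵢSᵢ + Σᵢ hᵢ'Tᵢ equals (|h|² − |h'|²)², i.e., det H = p² where p = |h|² − |h'|². -/
open Matrix Complex

/-- The self-dual generators S₁ = diag(τ₁,−τ₁), S₂ = diag(τ₂,τ₂), S₃ = diag(τ₃,−τ₃). -/
noncomputable def S : Fin 3 → Matrix (Fin 4) (Fin 4) ℂ
  | 0 => !![0, 1, 0, 0; 1, 0, 0, 0; 0, 0, 0, -1; 0, 0, -1, 0]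
  | 1 => !![0, -Complex.I, 0, 0; Complex.I, 0, 0, 0; 0, 0, 0, -Complex.I; 0, 0, Complex.I, 0]
  | 2 => !![1, 0, 0, 0; 0, -1, 0, 0; 0, 0, -1, 0; 0, 0, 0, 1]

/-- The anti-self-dual generators T₁ = [[0,iτ₂],[−iτ₂,0]], T₂ = [[0,τ₂],[τ₂,0]], T₃ = diag(I₂,−I₂). -/
noncomputable def T : Fin 3 → Matrix (Fin 4) (Fin 4) ℂ
  | 0 => !![0, 0, 0, 1; 0, 0, -1, 0; 0, -1, 0, 0; 1, 0, 0, 0]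
  | 1 => !![0, 0, 0, -Complex.I; 0, 0, Complex.I, 0; 0, -Complex.I, 0, 0; Complex.I, 0, 0, 0]
  | 2 => !![1, 0, 0, 0; 0, 1, 0, 0; 0, 0, -1, 0; 0, 0, 0, -1]

/-!
Writing `z = h₁ + i h₂` and `w = h₁' + i h₂'`, the matrix `H` has entries `h₃ ± h₃'`, `±z`, `±z̄`,
`±w`, `±w̄`. Its determinant, viewed as a polynomial in `h₃, h₃', z, z̄, w, w̄` with `z̄, w̄` treated
as independent variables, is already `(h₃² + z z̄ - h₃'² - w w̄)²`; substituting `z z̄ = h₁² + h₂²`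
and `w w̄ = h₁'² + h₂'²` gives the claim.
-/

theorem det_fin_four_eq_sq {R : Type*} [CommRing R] (a b z z' w w' : R) :
    det !![a + b, z', 0, w'; z, b - a, -w', 0; 0, -w, -a - b, -z; w, 0, -z', a - b] =
      (a ^ 2 + z * z' - (b ^ 2 + w * w')) ^ 2 := by
  simp [det_succ_row_zero, Fin.sum_univ_succ, Fin.succAbove]
  ring

theorem sum_smul_S_add_sum_smul_T (h h' : Fin 3 → ℂ) :
    ∑ i, h i • S i + ∑ i, h' i • T i =
      !![h 2 + h' 2, h 0 - h 1 * I, 0, h' 0 - h' 1 * I;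
        h 0 + h 1 * I, h' 2 - h 2, -(h' 0 - h' 1 * I), 0;
        0, -(h' 0 + h' 1 * I), -h 2 - h' 2, -(h 0 + h 1 * I);
        h' 0 + h' 1 * I, 0, -(h 0 - h 1 * I), h 2 - h' 2] := by
  ext i j
  fin_cases i <;> fin_cases j <;> simp [Fin.sum_univ_three, S, T] <;> ring

theorem ofReal_add_mul_I_mul_sub (x y : ℝ) :
    ((x : ℂ) + y * I) * (x - y * I) = ((x ^ 2 + y ^ 2 : ℝ) : ℂ) := by
  push_cast
  linear_combination (-(y : ℂ) ^ 2) * I_sq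

/-- det(Σ hᵢSᵢ + Σ hᵢ'Tᵢ) = (|h|² − |h'|²)². -/
theorem H_det (h h' : Fin 3 → ℝ) :
    Matrix.det (∑ i : Fin 3, (h i : ℂ) • S i + ∑ i : Fin 3, (h' i : ℂ) • T i) =
      (((∑ i : Fin 3, h i ^ 2) - ∑ i : Fin 3, h' i ^ 2 : ℝ) : ℂ) ^ 2 := by
  rw [sum_smul_S_add_sum_smul_T, det_fin_four_eq_sq, ofReal_add_mul_I_mul_sub,
    ofReal_add_mul_I_mul_sub]
  simp only [Fin.sum_univ_three]
  push_cast
  ring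
end

section
/- For real vectors h, h' ∈ ℝ³, the eigenvalues of the Hermitian matrix H = Σᵢ hᵢSᵢ + Σᵢ hᵢ'Tᵢ are ±|h| ± |h'| (with the four sign combinations), each occurring with the appropriate multiplicity; in particular the spectrum of H is contained in {|h|+|h'|, |h|−|h'|, −|h|+|h'|, −|h|−|h'|}. -/
open Matrix Complex

/-- Explicit form of Σ hᵢ Sᵢ. -/
lemma S_sum_eq (h : EuclideanSpace ℝ (Fin 3)) :
    (∑ i : Fin 3, (h i : ℂ) • S i) =
      !![(h 2 : ℂ), (h 0 : ℂ) - (h 1 : ℂ) * Complex.I, 0, 0;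
         (h 0 : ℂ) + (h 1 : ℂ) * Complex.I, -(h 2 : ℂ), 0, 0;
         0, 0, -(h 2 : ℂ), -(h 0 : ℂ) - (h 1 : ℂ) * Complex.I;
         0, 0, -(h 0 : ℂ) + (h 1 : ℂ) * Complex.I, (h 2 : ℂ)] := by
  ext i j
  fin_cases i <;> fin_cases j <;>
    simp [S, Fin.sum_univ_three, Matrix.vecHead, Matrix.vecTail] <;> ring

/-- Explicit form of Σ h'ᵢ Tᵢ. -/
lemma T_sum_eq (h' : EuclideanSpace ℝ (Fin 3)) :
    (∑ i : Fin 3, (h' i : ℂ) • T i) =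
      !![(h' 2 : ℂ), 0, 0, (h' 0 : ℂ) - (h' 1 : ℂ) * Complex.I;
         0, (h' 2 : ℂ), -(h' 0 : ℂ) + (h' 1 : ℂ) * Complex.I, 0;
         0, -(h' 0 : ℂ) - (h' 1 : ℂ) * Complex.I, -(h' 2 : ℂ), 0;
         (h' 0 : ℂ) + (h' 1 : ℂ) * Complex.I, 0, 0, -(h' 2 : ℂ)] := by
  ext i j
  fin_cases i <;> fin_cases j <;>
    simp [T, Fin.sum_univ_three, Matrix.vecHead, Matrix.vecTail] <;> ring

lemma norm_sq_eq (h : EuclideanSpace ℝ (Fin 3)) :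
    (‖h‖^2 : ℝ) = (h 0)^2 + (h 1)^2 + (h 2)^2 := by
  rw [EuclideanSpace.norm_eq, Real.sq_sqrt (by positivity)]
  simp [Fin.sum_univ_three, sq_abs]

lemma S_sum_sq (h : EuclideanSpace ℝ (Fin 3)) :
    (∑ i : Fin 3, (h i : ℂ) • S i) * (∑ i : Fin 3, (h i : ℂ) • S i)
      = ((‖h‖ : ℂ))^2 • 1 := by
  have hn := norm_sq_eq h
  rw [S_sum_eq]
  have : ((‖h‖ : ℂ))^2 = (((h 0)^2 + (h 1)^2 + (h 2)^2 : ℝ) : ℂ) := by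
    rw [← hn]; push_cast; ring
  rw [this]
  ext i j
  fin_cases i <;> fin_cases j <;>
    simp [Matrix.mul_apply, Fin.sum_univ_four, Matrix.one_apply, Matrix.vecHead,
      Matrix.vecTail] <;> push_cast <;> ring_nf <;> simp [Complex.I_sq] <;> ring

lemma T_sum_sq (h' : EuclideanSpace ℝ (Fin 3)) :
    (∑ i : Fin 3, (h' i : ℂ) • T i) * (∑ i : Fin 3, (h' i : ℂ) • T i)
      = ((‖h'‖ : ℂ))^2 • 1 := by
  have hn := norm_sq_eq h'
  rw [T_sum_eq]
  have : ((‖h'‖ : ℂ))^2 = (((h' 0)^2 + (h' 1)^2 + (h' 2)^2 : ℝ) : ℂ) := by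
    rw [← hn]; push_cast; ring
  rw [this]
  ext i j
  fin_cases i <;> fin_cases j <;>
    simp [Matrix.mul_apply, Fin.sum_univ_four, Matrix.one_apply, Matrix.vecHead,
      Matrix.vecTail] <;> push_cast <;> ring_nf <;> simp [Complex.I_sq] <;> ring

lemma ST_comm (h h' : EuclideanSpace ℝ (Fin 3)) :
    (∑ i : Fin 3, (h i : ℂ) • S i) * (∑ i : Fin 3, (h' i : ℂ) • T i)
      = (∑ i : Fin 3, (h' i : ℂ) • T i) * (∑ i : Fin 3, (h i : ℂ) • S i) := by
  rw [S_sum_eq, T_sum_eq]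
  ext i j
  fin_cases i <;> fin_cases j <;>
    simp [Matrix.mul_apply, Fin.sum_univ_four, Matrix.vecHead, Matrix.vecTail] <;> ring

/-- the spectrum of H = Σ hᵢSᵢ + Σ hᵢ'Tᵢ is contained in
{|h|+|h'|, |h|−|h'|, −|h|+|h'|, −|h|−|h'|}. -/
theorem H_spectrum (h h' : EuclideanSpace ℝ (Fin 3)) :
    spectrum ℂ (∑ i : Fin 3, (h i : ℂ) • S i + ∑ i : Fin 3, (h' i : ℂ) • T i) ⊆
      {((‖h‖ + ‖h'‖ : ℝ) : ℂ), ((‖h‖ - ‖h'‖ : ℝ) : ℂ),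
        ((-‖h‖ + ‖h'‖ : ℝ) : ℂ), ((-‖h‖ - ‖h'‖ : ℝ) : ℂ)} := by
  classical
  set X := ∑ i : Fin 3, (h i : ℂ) • S i with hXdef
  set Y := ∑ i : Fin 3, (h' i : ℂ) • T i with hYdef
  set c : ℂ := (‖h‖ : ℂ) with hc
  set d : ℂ := (‖h'‖ : ℂ) with hd
  have hX2 : X * X = (c^2) • 1 := S_sum_sq h
  have hY2 : Y * Y = (d^2) • 1 := T_sum_sq h'
  have hXY : X * Y = Y * X := ST_comm h h'
  set A := X + Y with hA
  -- A² = (c²+d²)•1 + 2•(X*Y)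
  have hA2 : A * A = (c^2 + d^2) • 1 + (2 : ℂ) • (X * Y) := by
    have : A * A = X * X + X * Y + (Y * X + Y * Y) := by
      rw [hA]; noncomm_ring
    rw [this, hX2, hY2, ← hXY]
    module
  have hZ2 : (X * Y) * (X * Y) = (c^2 * d^2) • 1 := by
    calc (X * Y) * (X * Y) = X * ((Y * X) * Y) := by noncomm_ring
    _ = X * ((X * Y) * Y) := by rw [← hXY]
    _ = (X * X) * (Y * Y) := by noncomm_ring
    _ = (c^2 * d^2) • 1 := by rw [hX2, hY2]; simp [smul_smul]; ring_nf
  -- annihilating identity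
  have key : (A * A - ((c + d)^2) • 1) * (A * A - ((c - d)^2) • 1) = 0 := by
    have e1 : A * A - ((c + d)^2) • 1 = (2 : ℂ) • (X * Y) - (2 * (c * d)) • 1 := by
      rw [hA2]; module
    have e2 : A * A - ((c - d)^2) • 1 = (2 : ℂ) • (X * Y) + (2 * (c * d)) • 1 := by
      rw [hA2]; module
    rw [e1, e2]
    simp only [sub_mul, mul_add, smul_mul_assoc, mul_smul_comm, smul_smul, mul_one, one_mul,
      hZ2]
    module
  -- polynomial p(X) = (X² - (c+d)²)(X² - (c-d)²)
  set p : Polynomial ℂ :=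
    (Polynomial.X ^ 2 - Polynomial.C ((c + d)^2)) *
      (Polynomial.X ^ 2 - Polynomial.C ((c - d)^2)) with hp
  have hpz : Polynomial.aeval A p = 0 := by
    rw [hp]
    simp only [_root_.map_mul, map_sub, map_pow, Polynomial.aeval_X, Polynomial.aeval_C,
      Algebra.algebraMap_eq_smul_one]
    simpa only [← sub_smul, smul_mul_smul_comm, mul_one, one_mul, pow_two] using key
  intro μ hμ
  have h1 : Polynomial.eval μ p ∈ spectrum ℂ (Polynomial.aeval A p) :=
    spectrum.subset_polynomial_aeval A p ⟨μ, hμ, rfl⟩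
  rw [hpz, spectrum.zero_eq] at h1
  have h2 : (μ^2 - (c + d)^2) * (μ^2 - (c - d)^2) = 0 := by
    have := Set.mem_singleton_iff.mp h1
    simpa [hp] using this
  have h3 : (μ - (c + d)) * ((μ - (c - d)) * ((μ - (-c + d)) * (μ - (-c - d)))) = 0 := by
    linear_combination h2
  simp only [Set.mem_insert_iff, Set.mem_singleton_iff]
  have hcast1 : ((‖h‖ + ‖h'‖ : ℝ) : ℂ) = c + d := by push_cast [hc, hd]; ring
  have hcast2 : ((‖h‖ - ‖h'‖ : ℝ) : ℂ) = c - d := by push_cast [hc, hd]; ring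
  have hcast3 : ((-‖h‖ + ‖h'‖ : ℝ) : ℂ) = -c + d := by push_cast [hc, hd]; ring
  have hcast4 : ((-‖h‖ - ‖h'‖ : ℝ) : ℂ) = -c - d := by push_cast [hc, hd]; ring
  rw [hcast1, hcast2, hcast3, hcast4]
  rcases mul_eq_zero.mp h3 with h4 | h4
  · exact Or.inl (sub_eq_zero.mp h4)
  rcases mul_eq_zero.mp h4 with h5 | h5
  · exact Or.inr (Or.inl (sub_eq_zero.mp h5))
  rcases mul_eq_zero.mp h5 with h6 | h6
  · exact Or.inr (Or.inr (Or.inl (sub_eq_zero.mp h6)))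
  · exact Or.inr (Or.inr (Or.inr (sub_eq_zero.mp h6)))
end

section
/- The Hermitian matrix H = Σᵢ hᵢSᵢ + Σᵢ hᵢ'Tᵢ is invertible if and only if |h| ≠ |h'|, equivalently p := |h|² − |h'|² ≠ 0. -/
/-! The determinant of `H` is `(‖h‖² - ‖h'‖²)²`, so `H` is invertible exactly when `‖h‖ ≠ ‖h'‖`. -/

open Matrix Complex

theorem det_sum_smul_S_add_sum_smul_T (a b : Fin 3 → ℝ) :
    (∑ i, (a i : ℂ) • S i + ∑ i, (b i : ℂ) • T i).det =
      ((∑ i, a i ^ 2 - ∑ i, b i ^ 2 : ℝ) : ℂ) ^ 2 := by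
  simp [S, T, det_succ_row_zero, Fin.sum_univ_succ, Fin.succAbove]
  ring_nf
  simp only [I_sq, I_pow_four]
  ring

/-- H = Σ hᵢSᵢ + Σ hᵢ'Tᵢ is invertible iff |h| ≠ |h'|,
equivalently p = |h|² − |h'|² ≠ 0. -/
theorem H_invertible_iff (h h' : EuclideanSpace ℝ (Fin 3)) :
    (IsUnit (∑ i : Fin 3, (h i : ℂ) • S i + ∑ i : Fin 3, (h' i : ℂ) • T i) ↔ ‖h‖ ≠ ‖h'‖) ∧
    (‖h‖ ≠ ‖h'‖ ↔ ‖h‖ ^ 2 - ‖h'‖ ^ 2 ≠ 0) := by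
  have norm_ne_iff : ‖h‖ ≠ ‖h'‖ ↔ ‖h‖ ^ 2 - ‖h'‖ ^ 2 ≠ 0 := by
    rw [sub_ne_zero, Ne, Ne, sq_eq_sq₀ (norm_nonneg h) (norm_nonneg h')]
  refine ⟨?_, norm_ne_iff⟩
  rw [isUnit_iff_isUnit_det, isUnit_iff_ne_zero, det_sum_smul_S_add_sum_smul_T,
    ← EuclideanSpace.real_norm_sq_eq, ← EuclideanSpace.real_norm_sq_eq, norm_ne_iff,
    ne_eq, pow_eq_zero_iff two_ne_zero, ofReal_eq_zero]
end

section
/- Let h, h' : M → ℝ³ be continuous on a topological space M with |h(k)| ≠ |h'(k)| for all k, and suppose |h(k)| > |h'(k)| for all k (positive Pfaffian case). Then the family H(k) = Σᵢ hᵢ(k)Sᵢ + Σᵢ hᵢ'(k)Tᵢ can be continuously deformed, through families of invertible Hermitian matrices, to the family H̃(k) = Σᵢ (hᵢ(k)/|h(k)|) Sᵢ; explicitly, H_t(k) = Σᵢ hᵢ(k)·((1−t) + t/|h(k)|)·Sᵢ + (1−t) Σᵢ hᵢ'(k)Tᵢ is Hermitian and invertible for all t ∈ [0,1]. -/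
/-!
Each of the families `S` and `T` satisfies the Clifford relations, and they commute with each
other. Hence for `X = ∑ aᵢ Sᵢ` and `Y = ∑ bᵢ Tᵢ` we get `X² = |a|²`, `Y² = |b|²` and
`(X + Y)(X - Y) = |a|² - |b|²`, so `X + Y` is invertible whenever `|a| ≠ |b|`. Along the
deformation `|a| = (1 - t)|h| + t > (1 - t)|h'| = |b|`.
-/

open Matrix Complex

lemma S_anticomm (i j : Fin 3) : S i * S j + S j * S i = if i = j then 2 else 0 := by
  rw [← Matrix.ext_iff]
  fin_cases i <;> fin_cases j <;>
    simp [S, Fin.forall_fin_succ, Matrix.ofNat_apply, one_add_one_eq_two]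

lemma T_anticomm (i j : Fin 3) : T i * T j + T j * T i = if i = j then 2 else 0 := by
  rw [← Matrix.ext_iff]
  fin_cases i <;> fin_cases j <;>
    simp [T, Fin.forall_fin_succ, Matrix.ofNat_apply, one_add_one_eq_two]

lemma S_commute_T (i j : Fin 3) : Commute (S i) (T j) := by
  rw [Commute, SemiconjBy, ← Matrix.ext_iff]
  fin_cases i <;> fin_cases j <;> simp [S, T]

lemma S_isHermitian (i : Fin 3) : (S i).IsHermitian := by
  rw [Matrix.IsHermitian, ← Matrix.ext_iff]
  fin_cases i <;> simp [S, Fin.forall_fin_succ]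

lemma T_isHermitian (i : Fin 3) : (T i).IsHermitian := by
  rw [Matrix.IsHermitian, ← Matrix.ext_iff]
  fin_cases i <;> simp [T, Fin.forall_fin_succ]

section Clifford

variable {ι κ A : Type*} [Fintype ι] [DecidableEq ι] [Fintype κ] [DecidableEq κ]
  [Ring A] [Algebra ℝ A]

theorem sum_smul_mul_self_of_anticomm {e : ι → A}
    (he : ∀ i j, e i * e j + e j * e i = if i = j then 2 else 0) (a : EuclideanSpace ℝ ι) :
    (∑ i, a i • e i) * (∑ i, a i • e i) = ‖a‖ ^ 2 • (1 : A) := by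
  set X := ∑ i, a i • e i
  have hXX : X * X = ∑ i, ∑ j, (a i * a j) • (e i * e j) := by
    simp only [X, Finset.sum_mul_sum, smul_mul_smul_comm]
  -- Adding the double sum to its transpose produces the anticommutators.
  have hsymm : X * X + X * X = (2 * ‖a‖ ^ 2) • (1 : A) := by
    calc X * X + X * X
        = ∑ i, ∑ j, (a i * a j) • (e i * e j + e j * e i) := by
          rw [hXX]
          nth_rw 2 [Finset.sum_comm]
          rw [← Finset.sum_add_distrib]
          refine Finset.sum_congr rfl fun i _ => ?_
          rw [← Finset.sum_add_distrib]
          refine Finset.sum_congr rfl fun j _ => ?_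
          rw [mul_comm (a j), smul_add]
      _ = ∑ i, (a i * a i) • (2 : A) := by
          simp only [he, smul_ite, smul_zero, Finset.sum_ite_eq, Finset.mem_univ, if_true]
      _ = (2 * ‖a‖ ^ 2) • (1 : A) := by
          rw [EuclideanSpace.real_norm_sq_eq, Finset.mul_sum, Finset.sum_smul]
          refine Finset.sum_congr rfl fun i _ => ?_
          rw [sq, mul_comm (2 : ℝ), ← smul_smul (a i * a i) (2 : ℝ), two_smul,
            one_add_one_eq_two]
  rw [← two_smul ℝ, mul_smul] at hsymm
  exact smul_right_injective A two_ne_zero hsymm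

theorem isUnit_sum_smul_add_sum_smul {e : ι → A} {f : κ → A}
    (he : ∀ i j, e i * e j + e j * e i = if i = j then 2 else 0)
    (hf : ∀ i j, f i * f j + f j * f i = if i = j then 2 else 0)
    (hef : ∀ i j, Commute (e i) (f j)) {a : EuclideanSpace ℝ ι} {b : EuclideanSpace ℝ κ}
    (hab : ‖a‖ ≠ ‖b‖) : IsUnit (∑ i, a i • e i + ∑ j, b j • f j) := by
  set X := ∑ i, a i • e i
  set Y := ∑ j, b j • f j
  have hXY : Commute X Y :=
    Commute.sum_left _ _ _ fun i _ => Commute.sum_right _ _ _ fun j _ =>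
      ((hef i j).smul_left _).smul_right _
  have hsq : IsUnit (X * X - Y * Y) := by
    have hne : ‖a‖ ^ 2 - ‖b‖ ^ 2 ≠ 0 := by
      rw [sub_ne_zero]
      exact fun h => hab ((pow_left_inj₀ (norm_nonneg _) (norm_nonneg _) two_ne_zero).mp h)
    rw [sum_smul_mul_self_of_anticomm he, sum_smul_mul_self_of_anticomm hf, ← sub_smul,
      ← Algebra.algebraMap_eq_smul_one]
    exact (IsUnit.mk0 _ hne).map _
  rw [hXY.mul_self_sub_mul_self_eq] at hsq
  have hcomm : Commute (X + Y) (X - Y) :=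
    ((Commute.refl X).add_left hXY.symm).sub_right (hXY.add_left (Commute.refl Y))
  exact (hcomm.isUnit_mul_iff.mp hsq).1

end Clifford

theorem Matrix.isHermitian_sum_smul {ι n : Type*} [Fintype ι] {M : ι → Matrix n n ℂ}
    (hM : ∀ i, (M i).IsHermitian) (a : ι → ℝ) : (∑ i, a i • M i).IsHermitian :=
  isSelfAdjoint_sum _ fun i _ => (hM i).smul (IsSelfAdjoint.all (a i))

theorem deformation_to_self_dual_general {M : Type*}
    (h h' : M → EuclideanSpace ℝ (Fin 3))
    (pos : ∀ k, ‖h' k‖ < ‖h k‖) :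
    ∀ t ∈ Set.Icc (0 : ℝ) 1, ∀ k : M,
      (∑ i : Fin 3, ((h k i * ((1 - t) + t / ‖h k‖) : ℝ) : ℂ) • S i +
          ((1 - t : ℝ) : ℂ) • ∑ i : Fin 3, ((h' k i : ℝ) : ℂ) • T i).IsHermitian ∧
      IsUnit (∑ i : Fin 3, ((h k i * ((1 - t) + t / ‖h k‖) : ℝ) : ℂ) • S i +
          ((1 - t : ℝ) : ℂ) • ∑ i : Fin 3, ((h' k i : ℝ) : ℂ) • T i) := by
  rintro t ⟨ht0, ht1⟩ k
  have hpos : 0 < ‖h k‖ := (norm_nonneg _).trans_lt (pos k)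
  set c := (1 - t) + t / ‖h k‖
  have hc : c * ‖h k‖ = (1 - t) * ‖h k‖ + t := by
    simp only [c]; field_simp
  have hnorm : ‖(1 - t) • h' k‖ < ‖c • h k‖ := by
    rw [norm_smul, norm_smul, Real.norm_of_nonneg (by linarith),
      Real.norm_of_nonneg (by positivity), hc]
    rcases ht0.eq_or_lt with rfl | ht
    · simpa using pos k
    · nlinarith [mul_nonneg (sub_nonneg.2 ht1) (sub_nonneg.2 (pos k).le)]
  simp only [Complex.coe_smul, Finset.smul_sum, smul_smul, mul_comm (h k _) c]
  exact ⟨(isHermitian_sum_smul S_isHermitian _).add (isHermitian_sum_smul T_isHermitian _),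
    isUnit_sum_smul_add_sum_smul S_anticomm T_anticomm S_commute_T hnorm.ne'⟩

/-- in the positive Pfaffian case |h(k)| > |h'(k)|, the family
H(k) = Σ hᵢ(k)Sᵢ + Σ hᵢ'(k)Tᵢ deforms through invertible Hermitian matrices, via
H_t(k) = Σ hᵢ(k)((1−t)+t/|h(k)|)Sᵢ + (1−t) Σ hᵢ'(k)Tᵢ, to H̃(k) = Σ (hᵢ(k)/|h(k)|)Sᵢ. -/
theorem deformation_to_self_dual {M : Type*} [TopologicalSpace M]
    (h h' : M → EuclideanSpace ℝ (Fin 3))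
    (hc : Continuous h) (hc' : Continuous h')
    (gap : ∀ k, ‖h k‖ ≠ ‖h' k‖) (pos : ∀ k, ‖h' k‖ < ‖h k‖) :
    ∀ t ∈ Set.Icc (0 : ℝ) 1, ∀ k : M,
      (∑ i : Fin 3, ((h k i * ((1 - t) + t / ‖h k‖) : ℝ) : ℂ) • S i +
          ((1 - t : ℝ) : ℂ) • ∑ i : Fin 3, ((h' k i : ℝ) : ℂ) • T i).IsHermitian ∧
      IsUnit (∑ i : Fin 3, ((h k i * ((1 - t) + t / ‖h k‖) : ℝ) : ℂ) • S i +
          ((1 - t : ℝ) : ℂ) • ∑ i : Fin 3, ((h' k i : ℝ) : ℂ) • T i) :=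
  deformation_to_self_dual_general h h' pos
end
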